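/- Let G be a graph, c a proper k-colouring of G, and let c_1, c_2 be distinct proper k-colourings each obtained from c by a non-trivial Kempe swap (a Kempe swap changing the colours of at least two vertices). Then c_1 and c_2 are not related by a single Kempe swap; i.e., the set of neighbours of c in K_k(G) reached by non-trivial Kempe swaps forms an independent set in K_k(G). -/

import Mathlib

/-!
A Kempe swap that changes a colouring is determined by one vertex it recolours together with
two distinct colours of its chain: these fix the colour pair, hence the Kempe graph, and the
chain is the component of that vertex. Suppose `c₁ → c₂` is a Kempe swap. If some vertex
recoloured by `c → c₁` keeps its colour in `c₂`, the swaps `c → c₁` and `c → c₂` coincide.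
Otherwise every vertex of the chain of `c → c₁` is recoloured again; that chain contains an edge,
whose ends have distinct colours in the proper colouring `c₁`, so `c₁ → c₂` uses the same pair
and chain, and therefore undoes `c → c₁`, i.e. `c₂ = c`.
-/

/-- A proper `k`-colouring of `G`: adjacent vertices receive distinct colours. -/
def ProperColoring {V : Type*} (G : SimpleGraph V) {k : ℕ} (c : V → Fin k) : Prop :=
  ∀ ⦃x y : V⦄, G.Adj x y → c x ≠ c y

/-- The subgraph of `G` induced by the vertices coloured `a` or `b` under `c`
(as a graph on all of `V`). -/
def kempeGraph {V : Type*} (G : SimpleGraph V) {k : ℕ} (c : V → Fin k) (a b : Fin k) :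
    SimpleGraph V where
  Adj x y := G.Adj x y ∧ (c x = a ∨ c x = b) ∧ (c y = a ∨ c y = b)
  symm := ⟨fun x y ⟨h, hx, hy⟩ => ⟨h.symm, hy, hx⟩⟩
  loopless := ⟨fun x ⟨h, _, _⟩ => G.loopless.irrefl x h⟩

open Classical in
/-- The colouring obtained from `c` by the Kempe swap exchanging colours `a` and `b`
on the connected component of `v` in the subgraph induced by colours `a` and `b`. -/
noncomputable def kempeSwap {V : Type*} (G : SimpleGraph V) {k : ℕ}
    (c : V → Fin k) (a b : Fin k) (v : V) : V → Fin k :=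
  fun x => if (kempeGraph G c a b).Reachable v x
    then (if c x = a then b else if c x = b then a else c x)
    else c x

/-- `d` is obtained from `c` by a single Kempe swap that actually changes the
colouring: adjacency in the Kempe-recolouring graph. -/
def KempeStep {V : Type*} (G : SimpleGraph V) {k : ℕ} (c d : V → Fin k) : Prop :=
  c ≠ d ∧ ∃ (a b : Fin k) (v : V), d = kempeSwap G c a b v

theorem pair_eq_or_swap_of_ne {α : Type*} {s t a b a' b' : α} (hst : s ≠ t)
    (hs : s = a ∨ s = b) (ht : t = a ∨ t = b) (hs' : s = a' ∨ s = b') (ht' : t = a' ∨ t = b') :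
    a' = a ∧ b' = b ∨ a' = b ∧ b' = a := by
  grind

section Kempe

variable {V : Type*} {G : SimpleGraph V} {k : ℕ} {c d e : V → Fin k} {a b : Fin k} {v x : V}

open Classical in
theorem kempeSwap_apply :
    kempeSwap G c a b v x =
      if (kempeGraph G c a b).Reachable v x then Equiv.swap a b (c x) else c x := by
  simp only [kempeSwap, Equiv.swap_apply_def]

theorem kempeGraph_comm : kempeGraph G c a b = kempeGraph G c b a := by
  ext x y
  simp only [kempeGraph, or_comm]

theorem kempeSwap_comm : kempeSwap G c a b v = kempeSwap G c b a v := by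
  funext x
  rw [kempeSwap_apply, kempeSwap_apply, kempeGraph_comm, Equiv.swap_comm]

theorem kempeSwap_eq_of_reachable {v' : V} (h : (kempeGraph G c a b).Reachable v v') :
    kempeSwap G c a b v = kempeSwap G c a b v' := by
  funext x
  have hx : (kempeGraph G c a b).Reachable v x ↔ (kempeGraph G c a b).Reachable v' x :=
    ⟨h.symm.trans, h.trans⟩
  rw [kempeSwap_apply, kempeSwap_apply]
  congr 1
  exact propext hx

theorem kempeSwap_apply_mem_pair_iff :
    (kempeSwap G c a b v x = a ∨ kempeSwap G c a b v x = b) ↔ (c x = a ∨ c x = b) := by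
  rw [kempeSwap_apply]
  split_ifs
  · rw [Equiv.swap_apply_eq_iff, Equiv.swap_apply_eq_iff, Equiv.swap_apply_left,
      Equiv.swap_apply_right, or_comm]
  · rfl

theorem kempeGraph_kempeSwap : kempeGraph G (kempeSwap G c a b v) a b = kempeGraph G c a b := by
  ext x y
  show _ ∧ _ ∧ _ ↔ _ ∧ _ ∧ _
  rw [kempeSwap_apply_mem_pair_iff, kempeSwap_apply_mem_pair_iff]

theorem kempeSwap_kempeSwap : kempeSwap G (kempeSwap G c a b v) a b v = c := by
  funext x
  rw [kempeSwap_apply, kempeGraph_kempeSwap, kempeSwap_apply]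
  split_ifs <;> simp

theorem reachable_kempeGraph_mem_pair_iff (h : (kempeGraph G c a b).Reachable v x) :
    (c v = a ∨ c v = b) ↔ (c x = a ∨ c x = b) := by
  obtain ⟨p⟩ := h
  induction p with
  | nil => rfl
  | cons hadj _ ih => exact iff_of_true hadj.2.1 (ih.1 hadj.2.2)

theorem kempeSwap_apply_ne_iff (hab : a ≠ b) (hv : c v = a ∨ c v = b) :
    kempeSwap G c a b v x ≠ c x ↔ (kempeGraph G c a b).Reachable v x := by
  rw [kempeSwap_apply]
  split_ifs with hr
  · simp only [hr, iff_true]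
    rcases (reachable_kempeGraph_mem_pair_iff hr).1 hv with h | h <;> simp [h, hab, hab.symm]
  · simp [hr]

theorem KempeStep.exists_eq_kempeSwap (h : KempeStep G c d) :
    ∃ a b v, a ≠ b ∧ (c v = a ∨ c v = b) ∧ d = kempeSwap G c a b v := by
  obtain ⟨hne, a, b, v, rfl⟩ := h
  obtain ⟨x, hx⟩ := Function.ne_iff.1 hne
  rw [kempeSwap_apply] at hx
  split_ifs at hx with hr
  · refine ⟨a, b, v, fun hab => ?_, (reachable_kempeGraph_mem_pair_iff hr).2 ?_, rfl⟩
    · simp [hab] at hx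
    · by_contra hxab
      rw [not_or] at hxab
      exact hx (Equiv.swap_apply_of_ne_of_ne hxab.1 hxab.2).symm
  · exact absurd rfl hx

theorem kempeSwap_eq_kempeSwap_of_reachable {a' b' s t : Fin k} {v' : V}
    (hx : (kempeGraph G c a b).Reachable v x) (hx' : (kempeGraph G c a' b').Reachable v' x)
    (hst : s ≠ t) (hs : s = a ∨ s = b) (ht : t = a ∨ t = b)
    (hs' : s = a' ∨ s = b') (ht' : t = a' ∨ t = b') :
    kempeSwap G c a b v = kempeSwap G c a' b' v' := by
  rcases pair_eq_or_swap_of_ne hst hs ht hs' ht' with ⟨rfl, rfl⟩ | ⟨rfl, rfl⟩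
  · exact kempeSwap_eq_of_reachable (hx.trans hx'.symm)
  · rw [kempeGraph_comm] at hx'
    conv_rhs => rw [kempeSwap_comm]
    exact kempeSwap_eq_of_reachable (hx.trans hx'.symm)

theorem KempeStep.eq_of_apply_eq (hd : KempeStep G c d) (he : KempeStep G c e) {y : V}
    (hy : d y ≠ c y) (hde : d y = e y) : d = e := by
  obtain ⟨a, b, v, hab, hv, rfl⟩ := hd.exists_eq_kempeSwap
  obtain ⟨a', b', v', hab', hv', rfl⟩ := he.exists_eq_kempeSwap
  have hry : (kempeGraph G c a b).Reachable v y := (kempeSwap_apply_ne_iff hab hv).1 hy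
  have hry' : (kempeGraph G c a' b').Reachable v' y :=
    (kempeSwap_apply_ne_iff hab' hv').1 (hde ▸ hy)
  have hcy := (reachable_kempeGraph_mem_pair_iff hry).1 hv
  have hcy' := (reachable_kempeGraph_mem_pair_iff hry').1 hv'
  exact kempeSwap_eq_kempeSwap_of_reachable hry hry' hy.symm hcy
    (kempeSwap_apply_mem_pair_iff.2 hcy) hcy' (hde ▸ kempeSwap_apply_mem_pair_iff.2 hcy')

theorem KempeStep.eq_of_kempeStep_of_forall_ne (hd : KempeStep G c d)
    (hdp : ProperColoring G d) (hnt : ∃ x y, x ≠ y ∧ d x ≠ c x ∧ d y ≠ c y)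
    (he : KempeStep G d e) (hsub : ∀ x, d x ≠ c x → e x ≠ d x) : e = c := by
  obtain ⟨a, b, v, hab, hv, rfl⟩ := hd.exists_eq_kempeSwap
  obtain ⟨α, β, w, hαβ, hw, rfl⟩ := he.exists_eq_kempeSwap
  have hchanged x := kempeSwap_apply_ne_iff (G := G) (x := x) hab hv
  obtain ⟨p, hvp⟩ : ∃ p, (kempeGraph G c a b).Adj v p := by
    obtain ⟨x, y, hxy, hx, hy⟩ := hnt
    obtain ⟨z, hvz, ⟨q⟩⟩ : ∃ z, v ≠ z ∧ (kempeGraph G c a b).Reachable v z := by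
      by_cases hvx : v = x
      · exact ⟨y, hvx ▸ hxy, (hchanged y).1 hy⟩
      · exact ⟨x, hvx, (hchanged x).1 hx⟩
    exact ⟨_, q.adj_snd (q.not_nil_of_ne hvz)⟩
  have hrv := (kempeSwap_apply_ne_iff hαβ hw).1 (hsub v ((hchanged v).2 .rfl))
  have hrp := (kempeSwap_apply_ne_iff hαβ hw).1 (hsub p ((hchanged p).2 hvp.reachable))
  calc _ = kempeSwap G (kempeSwap G c a b v) a b v :=
        kempeSwap_eq_kempeSwap_of_reachable hrv .rfl (hdp hvp.1)
          ((reachable_kempeGraph_mem_pair_iff hrv).1 hw)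
          ((reachable_kempeGraph_mem_pair_iff hrp).1 hw)
          (kempeSwap_apply_mem_pair_iff.2 hvp.2.1) (kempeSwap_apply_mem_pair_iff.2 hvp.2.2)
    _ = c := kempeSwap_kempeSwap

end Kempe

theorem stmt9_general {V : Type*} (G : SimpleGraph V) (k : ℕ)
    (c : V → Fin k)
    (c1 c2 : V → Fin k) (hc1 : ProperColoring G c1)
    (h12 : c1 ≠ c2)
    (hstep1 : KempeStep G c c1) (hstep2 : KempeStep G c c2)
    -- each swap is non-trivial: it changes the colour of at least two vertices
    (hnt1 : ∃ x y : V, x ≠ y ∧ c1 x ≠ c x ∧ c1 y ≠ c y) :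
    ¬ KempeStep G c1 c2 := by
  intro hstep
  by_cases hsub : ∀ x, c1 x ≠ c x → c2 x ≠ c1 x
  · exact hstep2.1 (hstep1.eq_of_kempeStep_of_forall_ne hc1 hnt1 hstep hsub).symm
  · push Not at hsub
    obtain ⟨y, hy, hy2⟩ := hsub
    exact h12 (hstep1.eq_of_apply_eq hstep2 hy hy2.symm)

theorem stmt9 {V : Type*} (G : SimpleGraph V) (k : ℕ)
    (c : V → Fin k) (hc : ProperColoring G c)
    (c1 c2 : V → Fin k) (hc1 : ProperColoring G c1) (hc2 : ProperColoring G c2)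
    (h12 : c1 ≠ c2)
    (hstep1 : KempeStep G c c1) (hstep2 : KempeStep G c c2)
    -- each swap is non-trivial: it changes the colour of at least two vertices
    (hnt1 : ∃ x y : V, x ≠ y ∧ c1 x ≠ c x ∧ c1 y ≠ c y)
    (hnt2 : ∃ x y : V, x ≠ y ∧ c2 x ≠ c x ∧ c2 y ≠ c y) :
    ¬ KempeStep G c1 c2 :=
  stmt9_general G k c c1 c2 hc1 h12 hstep1 hstep2 hnt1
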